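/- arXiv:2103.00294 — 2 statements merged into one kernel-verified Lean document; each statement's English description precedes it below -/
import Mathlib

section
/- For every integer m ≥ 2, the function t ↦ arctan(t^{1/m})/√t is strictly decreasing on (0,∞). -/
open Set Real

lemma self_div_lt_arctan {x : ℝ} (hx : 0 < x) : x / (1 + x ^ 2) < arctan x := by
  have key : StrictMonoOn (fun x : ℝ => arctan x - x / (1 + x ^ 2)) (Ici 0) := by
    apply strictMonoOn_of_deriv_pos (convex_Ici 0)
    · exact (Real.continuous_arctan.sub (continuous_id.div (by continuity)
        (fun x => by positivity))).continuousOn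
    · intro y hy
      rw [interior_Ici, mem_Ioi] at hy
      have h1 : (0:ℝ) < 1 + y ^ 2 := by positivity
      have hd : HasDerivAt (fun x : ℝ => arctan x - x / (1 + x ^ 2))
          (1 / (1 + y ^ 2) - ((1 * (1 + y ^ 2) - y * (2 * y)) / (1 + y ^ 2) ^ 2)) y := by
        exact (Real.hasDerivAt_arctan y).sub
          ((hasDerivAt_id y).div ((hasDerivAt_pow 2 y).const_add 1 |>.congr_deriv (by ring)) h1.ne')
      rw [hd.deriv]
      rw [div_sub_div _ _ h1.ne' (by positivity)]
      apply div_pos _ (by positivity)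
      have : (1 + y ^ 2) ^ 2 = (1 + y ^ 2) * (1 + y ^ 2) := sq (1 + y ^ 2)
      nlinarith [sq_nonneg y, mul_pos hy hy]
  have := key (self_mem_Ici : (0:ℝ) ∈ Ici 0) (le_of_lt hx : x ∈ Ici 0) hx
  simpa [arctan_zero] using this

lemma arctan_div_strictAnti : StrictAntiOn (fun x : ℝ => arctan x / x) (Ioi 0) := by
  apply strictAntiOn_of_deriv_neg (convex_Ioi 0)
  · apply ContinuousOn.div Real.continuous_arctan.continuousOn continuousOn_id
    intro x hx; exact ne_of_gt hx
  · intro y hy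
    rw [interior_Ioi, mem_Ioi] at hy
    have h1 : (0:ℝ) < 1 + y ^ 2 := by positivity
    have hd : HasDerivAt (fun x : ℝ => arctan x / x)
        ((1 / (1 + y ^ 2) * y - arctan y * 1) / y ^ 2) y :=
      (Real.hasDerivAt_arctan y).div (hasDerivAt_id y) hy.ne'
    rw [hd.deriv]
    apply div_neg_of_neg_of_pos _ (by positivity)
    have h2 := self_div_lt_arctan hy
    rw [div_lt_iff₀ h1] at h2
    have h3 : 1 / (1 + y ^ 2) * y - arctan y * 1 = y / (1 + y ^ 2) - arctan y := by ring
    rw [h3, sub_neg, div_lt_iff₀ h1]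
    linarith

theorem arctan_rpow_div_sqrt_strictAnti (m : ℕ) (hm : 2 ≤ m) :
    StrictAntiOn (fun t : ℝ => arctan (t ^ ((1:ℝ) / m)) / Real.sqrt t) (Ioi 0) := by
  have hm0 : (0:ℝ) < m := by positivity
  intro a ha b hb hab
  simp only [mem_Ioi] at ha hb
  set x := a ^ ((1:ℝ)/m) with hxd
  set y := b ^ ((1:ℝ)/m) with hyd
  have hx : 0 < x := Real.rpow_pos_of_pos ha _
  have hy : 0 < y := Real.rpow_pos_of_pos hb _
  have hxy : x < y := Real.rpow_lt_rpow (le_of_lt ha) hab (by positivity)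
  -- sqrt a = x ^ (m/2 : ℝ)
  have hsq : ∀ t : ℝ, 0 < t → Real.sqrt t = (t ^ ((1:ℝ)/m)) ^ ((m:ℝ)/2) := by
    intro t ht
    have hmne : (m:ℝ) ≠ 0 := by positivity
    rw [← Real.rpow_mul (le_of_lt ht), Real.sqrt_eq_rpow]
    congr 1
    field_simp
  have hsa : Real.sqrt a = x ^ ((m:ℝ)/2) := hsq a ha
  have hsb : Real.sqrt b = y ^ ((m:ℝ)/2) := hsq b hb
  simp only [← hxd, ← hyd, hsa, hsb]
  -- goal: arctan y / y ^ (m/2) < arctan x / x ^ (m/2)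
  have hxp : (0:ℝ) < x ^ ((m:ℝ)/2) := Real.rpow_pos_of_pos hx _
  have hyp : (0:ℝ) < y ^ ((m:ℝ)/2) := Real.rpow_pos_of_pos hy _
  rw [div_lt_div_iff₀ hyp hxp]
  -- arctan y * x^(m/2) < arctan x * y^(m/2)
  have e : ((m:ℝ)/2) = 1 + ((m:ℝ)/2 - 1) := by ring
  have hxe : x ^ ((m:ℝ)/2) = x * x ^ ((m:ℝ)/2 - 1) := by
    nth_rewrite 1 [e]; rw [Real.rpow_add hx, Real.rpow_one]
  have hye : y ^ ((m:ℝ)/2) = y * y ^ ((m:ℝ)/2 - 1) := by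
    nth_rewrite 1 [e]; rw [Real.rpow_add hy, Real.rpow_one]
  have hexp : (0:ℝ) ≤ (m:ℝ)/2 - 1 := by
    have : (2:ℝ) ≤ m := by exact_mod_cast hm
    linarith
  have hmono : x ^ ((m:ℝ)/2 - 1) ≤ y ^ ((m:ℝ)/2 - 1) :=
    Real.rpow_le_rpow hx.le hxy.le hexp
  have hkey : arctan y * x < arctan x * y := by
    have := arctan_div_strictAnti (mem_Ioi.2 hx) (mem_Ioi.2 hy) hxy
    rw [div_lt_div_iff₀ hy hx] at this
    linarith
  have hax : 0 < arctan x := by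
    rw [← Real.arctan_zero]; exact Real.arctan_strictMono hx
  have hay : 0 < arctan y := by
    rw [← Real.arctan_zero]; exact Real.arctan_strictMono hy
  calc arctan y * x ^ ((m:ℝ)/2) = (arctan y * x) * x ^ ((m:ℝ)/2 - 1) := by
        rw [hxe]; ring
    _ < (arctan x * y) * x ^ ((m:ℝ)/2 - 1) := by
        apply mul_lt_mul_of_pos_right hkey (Real.rpow_pos_of_pos hx _)
    _ ≤ (arctan x * y) * y ^ ((m:ℝ)/2 - 1) := by
        apply mul_le_mul_of_nonneg_left hmono (by positivity)
    _ = arctan x * y ^ ((m:ℝ)/2) := by rw [hye]; ring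
end

section
/- Let φ : (0,∞) → (0,∞) satisfy: φ(t)/√t is decreasing, and φ(t)·φ(1/t) ≤ φ(1)² for all t > 0. Suppose a, b > 0 satisfy a·b ≤ 1. Then a^n·φ(a^{−2n})·b^n·φ(b^{−2n}) ≤ φ(1)² for every positive integer n. -/
open Set

theorem BS_scalar_ineq (φ : ℝ → ℝ) (hφpos : ∀ t ∈ Ioi (0:ℝ), 0 < φ t)
    (hdec : AntitoneOn (fun t => φ t / Real.sqrt t) (Ioi 0))
    (hsub : ∀ t > (0:ℝ), φ t * φ (1 / t) ≤ (φ 1) ^ 2)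
    (n : ℕ) (hn : 0 < n) (a b : ℝ) (ha : 0 < a) (hb : 0 < b) (hab : a * b ≤ 1) :
    a ^ n * φ (a ^ (-(2 * (n:ℝ)))) * (b ^ n * φ (b ^ (-(2 * (n:ℝ))))) ≤ (φ 1) ^ 2 := by
  set s := a ^ (-(2 * (n:ℝ))) with hs_def
  set t := b ^ (-(2 * (n:ℝ))) with ht_def
  have hs : 0 < s := Real.rpow_pos_of_pos ha _
  have ht : 0 < t := Real.rpow_pos_of_pos hb _
  have hsqrt : ∀ x : ℝ, 0 < x → Real.sqrt (x ^ (-(2 * (n:ℝ)))) = (x ^ n)⁻¹ := by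
    intro x hx
    rw [Real.sqrt_eq_rpow, ← Real.rpow_mul hx.le, ← Real.rpow_natCast x n,
      ← Real.rpow_neg hx.le]
    congr 1
    ring
  have hsa : Real.sqrt s = (a ^ n)⁻¹ := hsqrt a ha
  have hsb : Real.sqrt t = (b ^ n)⁻¹ := hsqrt b hb
  have hapow : (0:ℝ) < a ^ n := pow_pos ha n
  have hbpow : (0:ℝ) < b ^ n := pow_pos hb n
  have h1s : (0:ℝ) < 1 / s := by positivity
  -- 1/s ≤ t
  have hts : 1 / s ≤ t := by
    have h1 : 1 / s = a ^ (2 * (n:ℝ)) := by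
      rw [hs_def, Real.rpow_neg ha.le, one_div, inv_inv]
    have h2 : t = (b⁻¹) ^ (2 * (n:ℝ)) := by
      rw [ht_def, Real.rpow_neg hb.le, ← Real.inv_rpow hb.le]
    have hab' : a ≤ b⁻¹ := by
      rw [← one_div]; exact (le_div_iff₀ hb).mpr hab
    rw [h1, h2]
    exact Real.rpow_le_rpow ha.le hab' (by positivity)
  have hkey : φ t / Real.sqrt t ≤ φ (1 / s) / Real.sqrt (1 / s) :=
    hdec (mem_Ioi.mpr h1s) (mem_Ioi.mpr ht) hts
  have hφs : 0 < φ s := hφpos s (mem_Ioi.mpr hs)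
  have hsqrts : (0:ℝ) < Real.sqrt s := Real.sqrt_pos.mpr hs
  calc a ^ n * φ s * (b ^ n * φ t)
      = (φ s / Real.sqrt s) * (φ t / Real.sqrt t) := by
        rw [hsa, hsb]; field_simp
    _ ≤ (φ s / Real.sqrt s) * (φ (1 / s) / Real.sqrt (1 / s)) := by
        apply mul_le_mul_of_nonneg_left hkey (by positivity)
    _ = φ s * φ (1 / s) := by
        rw [one_div, Real.sqrt_inv]
        field_simp
    _ ≤ (φ 1) ^ 2 := hsub s hs
end
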